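/- Let d ∈ ℕ with P_d > 0. If k_d(n⁻, n⁰, n⁺) = 1, then n⁰ = 0. -/

import Mathlib

/-- Total weight `W(v) = Σ_{i : v_i ≠ 0} w_i` of the axes with at least one available split. -/
noncomputable def bartW (p : ℕ) (w : Fin p → ℝ) (v : Fin p → ℕ) : ℝ :=
  ∑ i ∈ Finset.univ.filter (fun i => v i ≠ 0), w i

/-- The BART sub-correlation function `k_d(n⁻, n⁰, n⁺)`, defined by well-founded recursion
on `Σ_i (n⁻_i + n⁺_i)`. -/
noncomputable def bartK (p : ℕ) (w : Fin p → ℝ) (P : ℕ → ℝ)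
    (d : ℕ) (nm n0 np : Fin p → ℕ) : ℝ :=
  if ∀ i, nm i + n0 i + np i = 0 then 1
  else
    1 - P d * (1 - (1 / bartW p w (fun i => nm i + n0 i + np i)) *
      ∑ i ∈ Finset.univ.filter (fun i => nm i + n0 i + np i ≠ 0),
        (w i / ((nm i + n0 i + np i : ℕ) : ℝ)) *
          ((∑ k ∈ (Finset.range (nm i)).attach,
              bartK p w P (d+1) (Function.update nm i k.1) n0 np) +
           (∑ k ∈ (Finset.range (np i)).attach,
              bartK p w P (d+1) nm n0 (Function.update np i k.1))))
termination_by ∑ i, (nm i + np i)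
decreasing_by
  · have hk : k.1 < nm i := Finset.mem_range.mp k.2
    refine Finset.sum_lt_sum (fun j _ => ?_) ⟨i, Finset.mem_univ i, ?_⟩
    · rcases eq_or_ne j i with rfl | hj
      · simp only [Function.update_self]; omega
      · simp only [Function.update_of_ne hj]; omega
    · simp only [Function.update_self]; omega
  · have hk : k.1 < np i := Finset.mem_range.mp k.2
    refine Finset.sum_lt_sum (fun j _ => ?_) ⟨i, Finset.mem_univ i, ?_⟩
    · rcases eq_or_ne j i with rfl | hj
      · simp only [Function.update_self]; omega
      · simp only [Function.update_of_ne hj]; omega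
    · simp only [Function.update_self]; omega

/-!
Every `k_d` is at most `1`: by well-founded induction each of the `n⁻_i + n⁺_i` children along
axis `i` contributes at most `1`, so the bracket `(1/n_i)·Σ(children)` is at most
`(n⁻_i + n⁺_i)/n_i ≤ 1`, and the `w`-weighted average of the brackets is at most `1`.
If `n⁰_i ≠ 0`, the bracket of axis `i` is `< 1`, so the average is `< 1` and, as `P_d > 0`,
`k_d < 1`.
-/

theorem Finset.sum_update_lt_sum {ι : Type*} [Fintype ι] [DecidableEq ι] {f : ι → ℕ} {i : ι}
    {k : ℕ} (hk : k < f i) : ∑ j, Function.update f i k j < ∑ j, f j :=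
  Finset.sum_lt_sum (fun j _ => update_le_self_iff.mpr hk.le j)
    ⟨i, Finset.mem_univ i, by simpa using hk⟩

section

variable {K : Type*} [Field K] [LinearOrder K] [IsStrictOrderedRing K] {a v c : K}

lemma div_mul_le_self_of_le (ha : 0 ≤ a) (hv : 0 < v) (hc : c ≤ v) : a / v * c ≤ a := by
  rw [div_mul_eq_mul_div, div_le_iff₀ hv]
  exact mul_le_mul_of_nonneg_left hc ha

lemma div_mul_lt_self_of_lt (ha : 0 < a) (hv : 0 < v) (hc : c < v) : a / v * c < a := by
  rw [div_mul_eq_mul_div, div_lt_iff₀ hv]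
  exact mul_lt_mul_of_pos_left hc ha

end

section

variable {p : ℕ} {w : Fin p → ℝ} {P : ℕ → ℝ}

lemma bartW_pos (hw : ∀ i, 0 < w i) {v : Fin p → ℕ} (hv : ¬ ∀ i, v i = 0) :
    0 < bartW p w v := by
  obtain ⟨i, hi⟩ := not_forall.mp hv
  exact Finset.sum_pos (fun j _ => hw j) ⟨i, Finset.mem_filter.mpr ⟨Finset.mem_univ i, hi⟩⟩

lemma one_div_bartW_mul_sum_le_one (hw : ∀ i, 0 < w i) {v : Fin p → ℕ} (hv : ¬ ∀ i, v i = 0)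
    {c : Fin p → ℝ} (hc : ∀ i, v i ≠ 0 → c i ≤ v i) :
    1 / bartW p w v * ∑ i ∈ Finset.univ.filter (fun i => v i ≠ 0), w i / v i * c i ≤ 1 := by
  rw [one_div_mul_eq_div, div_le_one (bartW_pos hw hv)]
  refine Finset.sum_le_sum fun i hi => ?_
  have hvi : v i ≠ 0 := (Finset.mem_filter.mp hi).2
  exact div_mul_le_self_of_le (hw i).le (by positivity) (hc i hvi)

lemma one_div_bartW_mul_sum_lt_one (hw : ∀ i, 0 < w i) {v : Fin p → ℕ} {c : Fin p → ℝ}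
    (hc : ∀ i, v i ≠ 0 → c i ≤ v i) {i₀ : Fin p} (hv₀ : v i₀ ≠ 0) (hc₀ : c i₀ < v i₀) :
    1 / bartW p w v * ∑ i ∈ Finset.univ.filter (fun i => v i ≠ 0), w i / v i * c i < 1 := by
  rw [one_div_mul_eq_div, div_lt_one (bartW_pos hw fun h => hv₀ (h i₀))]
  refine Finset.sum_lt_sum (fun i hi => ?_) ⟨i₀, Finset.mem_filter.mpr ⟨Finset.mem_univ _, hv₀⟩, ?_⟩
  · have hvi : v i ≠ 0 := (Finset.mem_filter.mp hi).2
    exact div_mul_le_self_of_le (hw i).le (by positivity) (hc i hvi)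
  · exact div_mul_lt_self_of_lt (hw i₀) (by positivity) hc₀

noncomputable def bartChildSum (p : ℕ) (w : Fin p → ℝ) (P : ℕ → ℝ) (d : ℕ) (nm n0 np : Fin p → ℕ)
    (i : Fin p) : ℝ :=
  (∑ k ∈ (Finset.range (nm i)).attach, bartK p w P (d+1) (Function.update nm i k.1) n0 np) +
    ∑ k ∈ (Finset.range (np i)).attach, bartK p w P (d+1) nm n0 (Function.update np i k.1)

lemma bartK_of_not_forall_eq_zero {d : ℕ} {nm n0 np : Fin p → ℕ}
    (hn : ¬ ∀ i, nm i + n0 i + np i = 0) :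
    bartK p w P d nm n0 np =
      1 - P d * (1 - (1 / bartW p w (fun i => nm i + n0 i + np i)) *
        ∑ i ∈ Finset.univ.filter (fun i => nm i + n0 i + np i ≠ 0),
          w i / ((nm i + n0 i + np i : ℕ) : ℝ) * bartChildSum p w P d nm n0 np i) := by
  rw [bartK, if_neg hn]
  rfl

lemma bartChildSum_le {d : ℕ} {nm n0 np : Fin p → ℕ} {i : Fin p}
    (hm : ∀ k < nm i, bartK p w P (d+1) (Function.update nm i k) n0 np ≤ 1)
    (hp : ∀ k < np i, bartK p w P (d+1) nm n0 (Function.update np i k) ≤ 1) :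
    bartChildSum p w P d nm n0 np i ≤ nm i + np i := by
  unfold bartChildSum
  gcongr
  · calc _ ≤ ∑ _k ∈ (Finset.range (nm i)).attach, (1 : ℝ) :=
          Finset.sum_le_sum fun k _ => hm k (Finset.mem_range.mp k.2)
      _ = nm i := by simp
  · calc _ ≤ ∑ _k ∈ (Finset.range (np i)).attach, (1 : ℝ) :=
          Finset.sum_le_sum fun k _ => hp k (Finset.mem_range.mp k.2)
      _ = np i := by simp

lemma bartK_le_one (hw : ∀ i, 0 < w i) (hP : ∀ d, 0 ≤ P d) (d : ℕ) (nm n0 np : Fin p → ℕ) :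
    bartK p w P d nm n0 np ≤ 1 := by
  by_cases hn : ∀ i, nm i + n0 i + np i = 0
  · rw [bartK, if_pos hn]
  rw [bartK_of_not_forall_eq_zero hn]
  have hmean := one_div_bartW_mul_sum_le_one hw hn (c := bartChildSum p w P d nm n0 np)
    fun i _ => (bartChildSum_le (fun k _ => bartK_le_one hw hP (d+1) _ n0 np)
      (fun k _ => bartK_le_one hw hP (d+1) nm n0 _)).trans (by push_cast; linarith)
  nlinarith [hP d]
termination_by ∑ i, (nm i + np i)
decreasing_by
  all_goals
    simp only [Finset.sum_add_distrib]
    have := Finset.sum_update_lt_sum ‹_ < _›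
    omega

end

theorem bartK_eq_one_implies_nZero_eq_zero_general
    (p : ℕ) (w : Fin p → ℝ) (hw : ∀ i, 0 < w i)
    (P : ℕ → ℝ) (hP : ∀ d, P d ∈ Set.Icc (0 : ℝ) 1)
    (d : ℕ) (hPd : 0 < P d) (nm n0 np : Fin p → ℕ)
    (h : bartK p w P d nm n0 np = 1) :
    n0 = 0 := by
  by_contra hn0
  obtain ⟨i₀, hi₀⟩ : ∃ i, n0 i ≠ 0 := Function.ne_iff.mp hn0
  have hi₀_pos : (0 : ℝ) < n0 i₀ := Nat.cast_pos.mpr (Nat.pos_of_ne_zero hi₀)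
  have hle : ∀ d nm n0 np, bartK p w P d nm n0 np ≤ 1 := bartK_le_one hw fun d => (hP d).1
  have hchild : ∀ i, bartChildSum p w P d nm n0 np i ≤ nm i + np i := fun _ =>
    bartChildSum_le (fun _ _ => hle _ _ _ _) (fun _ _ => hle _ _ _ _)
  have hmean := one_div_bartW_mul_sum_lt_one hw (v := fun i => nm i + n0 i + np i)
    (fun i _ => (hchild i).trans (by push_cast; linarith)) (i₀ := i₀) (by omega)
    ((hchild i₀).trans_lt (by push_cast; linarith))
  rw [bartK_of_not_forall_eq_zero fun h => hi₀ (by have := h i₀; omega)] at h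
  nlinarith

/-- Property 4 of Theorem 2: if `P_d > 0` and `k_d(n⁻, n⁰, n⁺) = 1`, then `n⁰ = 0`. -/
theorem bartK_eq_one_implies_nZero_eq_zero
    (p : ℕ) (hp : 1 ≤ p) (w : Fin p → ℝ) (hw : ∀ i, 0 < w i)
    (P : ℕ → ℝ) (hP : ∀ d, P d ∈ Set.Icc (0 : ℝ) 1)
    (d : ℕ) (hPd : 0 < P d) (nm n0 np : Fin p → ℕ)
    (h : bartK p w P d nm n0 np = 1) :
    n0 = 0 :=
  bartK_eq_one_implies_nZero_eq_zero_general p w hw P hP d hPd nm n0 np h
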